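/- Let α_ε be the Karasev realization map of a Poisson structure π on ℝ^n. Its Taylor expansion in ε begins α_ε^i(x,p) = x^i + (ε/2) π^{vi}(x) p_v + (ε²/12) ∂_u π^{vi}(x) π^{wu}(x) p_v p_w + O(ε³). -/

import Mathlib

open Set Topology Filter

lemma karasev_escape {E : Type*} [NormedAddCommGroup E] [NormedSpace ℝ E]
    (y g : ℝ → E) (x : E) (M T : ℝ)
    (hd : ∀ u, HasDerivAt y (g u) u)
    (hb : ∀ u, ‖y u - x‖ ≤ 2 → ‖g u‖ ≤ M)
    (h0 : ‖y 0 - x‖ ≤ 1) (hM : 0 ≤ M) (hT : 0 ≤ T) (hMT : T * M < 1) :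
    ∀ t ∈ Icc (0:ℝ) T, ‖y t - x‖ ≤ 2 ∧ ‖y t - y 0‖ ≤ M * t := by
  have ycont : Continuous y := by
    rw [continuous_iff_continuousAt]; exact fun u => (hd u).continuousAt
  have key : ∀ t ∈ Icc (0:ℝ) T, ‖y t - x‖ ≤ 2 := by
    by_contra h
    push_neg at h
    obtain ⟨t₁, ht₁, ht₁2⟩ := h
    set A := {t ∈ Icc (0:ℝ) T | 2 ≤ ‖y t - x‖} with hA
    have hA_closed : IsClosed A :=
      IsClosed.inter isClosed_Icc
        (isClosed_le continuous_const ((ycont.sub continuous_const).norm))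
    have hA_ne : A.Nonempty := ⟨t₁, ht₁, le_of_lt ht₁2⟩
    have hA_bdd : BddBelow A := ⟨0, fun t ht => ht.1.1⟩
    set t₀ := sInf A with ht₀def
    have ht₀A : t₀ ∈ A := hA_closed.csInf_mem hA_ne hA_bdd
    have ht₀Icc : t₀ ∈ Icc (0:ℝ) T := ht₀A.1
    have ht₀2 : 2 ≤ ‖y t₀ - x‖ := ht₀A.2
    have ht₀pos : 0 < t₀ := by
      rcases lt_or_eq_of_le ht₀Icc.1 with h | h
      · exact h
      · exfalso; rw [← h] at ht₀2; linarith
    have hlt : ∀ u, 0 ≤ u → u < t₀ → ‖y u - x‖ < 2 := by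
      intro u hu hut
      by_contra hge
      push_neg at hge
      have : u ∈ A := ⟨⟨hu, le_trans hut.le ht₀Icc.2⟩, hge⟩
      exact absurd (csInf_le hA_bdd this) (not_le.2 hut)
    have hball : ∀ u ∈ Icc (0:ℝ) t₀, ‖y u - x‖ ≤ 2 := by
      intro u hu
      rcases lt_or_eq_of_le hu.2 with h | h
      · exact (hlt u hu.1 h).le
      · rw [h]
        have hne : (𝓝[<] t₀).NeBot := nhdsLT_neBot t₀
        have htend : Filter.Tendsto (fun v => ‖y v - x‖) (𝓝[<] t₀) (𝓝 ‖y t₀ - x‖) :=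
          ((ycont.sub continuous_const).norm).continuousAt.continuousWithinAt.tendsto
        apply le_of_tendsto htend
        have hev1 : ∀ᶠ v in 𝓝[<] t₀, (0:ℝ) < v :=
          nhdsWithin_le_nhds (eventually_gt_nhds ht₀pos)
        have hev2 : ∀ᶠ v in 𝓝[<] t₀, v < t₀ := eventually_mem_nhdsWithin
        filter_upwards [hev1, hev2] with v hv1 hv2
        exact (hlt v hv1.le hv2).le
    have hMVT : ‖y t₀ - y 0‖ ≤ M * ‖t₀ - (0:ℝ)‖ :=
      Convex.norm_image_sub_le_of_norm_hasDerivWithin_le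
        (fun u hu => (hd u).hasDerivWithinAt)
        (fun u hu => hb u (hball u hu)) (convex_Icc _ _)
        ⟨le_refl 0, ht₀pos.le⟩ ⟨ht₀pos.le, le_refl t₀⟩
    rw [sub_zero, Real.norm_eq_abs, abs_of_nonneg ht₀pos.le] at hMVT
    have htri : ‖y t₀ - x‖ ≤ ‖y t₀ - y 0‖ + ‖y 0 - x‖ := norm_sub_le_norm_sub_add_norm_sub _ _ _
    have hMt : M * t₀ ≤ M * T := mul_le_mul_of_nonneg_left ht₀Icc.2 hM
    nlinarith
  intro t ht
  refine ⟨key t ht, ?_⟩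
  have hMVT : ‖y t - y 0‖ ≤ M * ‖t - (0:ℝ)‖ :=
    Convex.norm_image_sub_le_of_norm_hasDerivWithin_le
      (fun u hu => (hd u).hasDerivWithinAt)
      (fun u hu => hb u (key u hu)) (convex_Icc _ _)
      ⟨le_refl 0, hT⟩ ht
  rwa [sub_zero, Real.norm_eq_abs, abs_of_nonneg ht.1] at hMVT

lemma karasev_traj {E : Type*} [NormedAddCommGroup E] [NormedSpace ℝ E]
    (y g : ℝ → E) (x : E) (M ε : ℝ)
    (hd : ∀ u, HasDerivAt y (g u) u)
    (hb : ∀ u, ‖y u - x‖ ≤ 2 → ‖g u‖ ≤ M)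
    (h0 : ‖y 0 - x‖ ≤ 1) (hM : 0 ≤ M) (hMT : |ε| * M < 1) :
    ∀ t ∈ uIcc (0:ℝ) ε, ‖y t - x‖ ≤ 2 ∧ ‖y t - y 0‖ ≤ M * |t| := by
  intro t ht
  rcases le_total 0 ε with hε | hε
  · rw [uIcc_of_le hε] at ht
    obtain ⟨h1, h2⟩ := karasev_escape y g x M ε hd hb h0 hM hε
      (by rwa [abs_of_nonneg hε] at hMT) t ht
    exact ⟨h1, by rwa [abs_of_nonneg ht.1]⟩
  · rw [uIcc_of_ge hε] at ht
    have hdz : ∀ u, HasDerivAt (fun s => y (-s)) ((-1 : ℝ) • g (-u)) u := fun u =>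
      HasDerivAt.scomp u (hd (-u)) (hasDerivAt_neg u)
    have hbz : ∀ u, ‖y (-u) - x‖ ≤ 2 → ‖(-1:ℝ) • g (-u)‖ ≤ M := fun u h => by
      rw [norm_smul]; simpa using hb (-u) h
    have hz0 : ‖y (-0) - x‖ ≤ 1 := by simpa using h0
    obtain ⟨h1, h2⟩ := karasev_escape (fun s => y (-s)) _ x M (-ε) hdz hbz hz0 hM
      (by linarith) (by rwa [abs_of_nonpos hε] at hMT) (-t)
      ⟨by linarith [ht.2], by linarith [ht.1]⟩
    constructor
    · simpa using h1
    · have h3 : ‖y t - y (-0)‖ ≤ M * (-t) := by simpa using h2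
      rw [abs_of_nonpos ht.2]
      simpa using h3

lemma karasev_quad {E F : Type*} [NormedAddCommGroup E] [NormedSpace ℝ E]
    [NormedAddCommGroup F] [NormedSpace ℝ F]
    (f : E → F) (hdiff : ∀ w, DifferentiableAt ℝ f w)
    (s : Set E) (hs : Convex ℝ s) (L : ℝ) (hL0 : 0 ≤ L)
    (hL : ∀ a ∈ s, ∀ b ∈ s, ‖fderiv ℝ f a - fderiv ℝ f b‖ ≤ L * ‖a - b‖)
    (a : E) (ha : a ∈ s) (b : E) (hb : b ∈ s) :
    ‖f b - f a - fderiv ℝ f a (b - a)‖ ≤ L * ‖b - a‖ ^ 2 := by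
  have hseg : segment ℝ a b ⊆ s := hs.segment_subset ha hb
  have key := Convex.norm_image_sub_le_of_norm_fderiv_le'
    (f := f) (φ := fderiv ℝ f a) (s := segment ℝ a b) (C := L * ‖b - a‖)
    (x := a) (y := b)
    (fun w _ => hdiff w)
    (fun w hw => by
      have h1 : ‖fderiv ℝ f w - fderiv ℝ f a‖ ≤ L * ‖w - a‖ := hL w (hseg hw) a ha
      have h2 : ‖w - a‖ ≤ ‖b - a‖ := by
        have h3 := dist_add_dist_of_mem_segment hw
        rw [dist_eq_norm, dist_eq_norm, dist_eq_norm] at h3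
        have h4 : (0:ℝ) ≤ ‖w - b‖ := norm_nonneg _
        calc ‖w - a‖ = ‖a - w‖ := norm_sub_rev _ _
        _ ≤ ‖a - b‖ := by linarith
        _ = ‖b - a‖ := norm_sub_rev _ _
      exact h1.trans (mul_le_mul_of_nonneg_left h2 hL0))
    (convex_segment a b) (left_mem_segment ℝ a b) (right_mem_segment ℝ a b)
  calc ‖f b - f a - fderiv ℝ f a (b - a)‖ ≤ L * ‖b - a‖ * ‖b - a‖ := key
  _ = L * ‖b - a‖ ^ 2 := by ring

lemma karasev_sum_identity {d : ℕ} (P : Fin d → Fin d → ℝ) (D : Fin d → Fin d → ℝ) (p : Fin d → ℝ) :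
    -(∑ v : Fin d, p v * ∑ u : Fin d, (-∑ w : Fin d, P w u * p w) * D v u)
      = ∑ v : Fin d, ∑ w : Fin d, ∑ u : Fin d, D v u * P w u * p v * p w := by
  simp only [neg_mul, mul_neg, Finset.sum_neg_distrib, neg_neg, Finset.mul_sum, Finset.sum_mul]
  refine Finset.sum_congr rfl fun v _ => ?_
  rw [Finset.sum_comm]
  refine Finset.sum_congr rfl fun w _ => Finset.sum_congr rfl fun u _ => by ring

lemma karasev_clm_expand {d : ℕ} (ℓ : (Fin d → ℝ) →L[ℝ] ℝ) (v : Fin d → ℝ) :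
    ℓ v = ∑ u : Fin d, v u * ℓ (Pi.single u 1) := by
  have hv : v = ∑ u : Fin d, v u • (Pi.single u 1 : Fin d → ℝ) := by
    funext j
    rw [Finset.sum_apply]
    simp [Pi.single_apply]
  conv_lhs => rw [hv]
  rw [map_sum]
  simp [smul_eq_mul]

set_option maxHeartbeats 1000000 in
/-- Taylor expansion of the Karasev realization map:
`α_ε^i(x,p) = x^i + (ε/2) π^{vi} p_v + (ε²/12) ∂_u π^{vi} π^{wu} p_v p_w + O(ε³)`.
Here `α` is characterized by the implicit relation `φav ε (α_ε(x,p), p) = x`, with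
`φav` the x-average of the flow of the flat Poisson spray. -/
theorem karasev_realization_taylor_expansion {d : ℕ}
    (π : (Fin d → ℝ) → Fin d → Fin d → ℝ) (hπ : ContDiff ℝ (⊤ : ℕ∞) π)
    (hπskew : ∀ x i j, π x j i = - π x i j)
    (V : (Fin d → ℝ) × (Fin d → ℝ) → (Fin d → ℝ) × (Fin d → ℝ))
    (hV : ∀ z, V z = (fun j => -∑ i : Fin d, π z.1 i j * z.2 i, 0))
    (φ : ℝ → (Fin d → ℝ) × (Fin d → ℝ) → (Fin d → ℝ) × (Fin d → ℝ))
    (hφ0 : φ 0 = id)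
    (hφflow : ∀ z s, HasDerivAt (fun s : ℝ => φ s z) (V (φ s z)) s)
    (φav : ℝ → (Fin d → ℝ) × (Fin d → ℝ) → (Fin d → ℝ))
    (hφav : ∀ (ε : ℝ) z, φav ε z =
      if ε = 0 then z.1 else ε⁻¹ • (∫ s in (0:ℝ)..ε, (φ s z).1))
    (α : ℝ → (Fin d → ℝ) × (Fin d → ℝ) → (Fin d → ℝ))
    (hα : ∀ (ε : ℝ) (x p : Fin d → ℝ), φav ε (α ε (x, p), p) = x)
    (hαsmooth : ContDiff ℝ (⊤ : ℕ∞)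
      (fun q : ℝ × ((Fin d → ℝ) × (Fin d → ℝ)) => α q.1 q.2)) :
    ∀ x p : Fin d → ℝ, ∃ C > 0, ∃ δ > 0, ∀ ε : ℝ, |ε| < δ →
      ‖α ε (x, p) -
        (x
          + (ε / 2) • (fun i => ∑ v : Fin d, π x v i * p v)
          + (ε ^ 2 / 12) • (fun i => ∑ v : Fin d, ∑ w : Fin d, ∑ u : Fin d,
              fderiv ℝ (fun y => π y v i) x (Pi.single u 1) * π x w u * p v * p w))‖
        ≤ C * |ε| ^ 3 := by
  intro x p
  -- the vector field on position space
  set W : (Fin d → ℝ) → (Fin d → ℝ) := fun y j => -∑ v : Fin d, π y v j * p v with hWdef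
  have hπc : ∀ v i, ContDiff ℝ (⊤ : ℕ∞) (fun y => π y v i) := fun v i =>
    contDiff_pi.1 (contDiff_pi.1 hπ v) i
  have hWc : ContDiff ℝ (⊤ : ℕ∞) W :=
    contDiff_pi.2 fun j => (ContDiff.sum fun v _ => (hπc v j).mul contDiff_const).neg
  have hWd : Differentiable ℝ W := hWc.differentiable (by simp)
  -- the flow preserves the momentum
  have hsnd : ∀ z s, (φ s z).2 = z.2 := by
    intro z s
    have hg : ∀ t, HasDerivAt (fun t => (φ t z).2) 0 t := by
      intro t
      have h2 : HasDerivAt (fun t => (φ t z).2) (V (φ t z)).2 t :=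
        HasFDerivAt.comp_hasDerivAt t
          (ContinuousLinearMap.snd ℝ (Fin d → ℝ) (Fin d → ℝ)).hasFDerivAt (hφflow z t)
      rw [hV] at h2
      exact h2
    have hdiff : Differentiable ℝ (fun t => (φ t z).2) := fun t => (hg t).differentiableAt
    have hfd : ∀ t, fderiv ℝ (fun t => (φ t z).2) t = 0 := by
      intro t
      have := (hg t).hasFDerivAt.fderiv
      rw [this]
      ext v
      simp
    have := is_const_of_fderiv_eq_zero hdiff hfd s 0
    rw [this, hφ0]
    rfl
  -- derivative of the position trajectory
  have hy' : ∀ (c : Fin d → ℝ) (s : ℝ),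
      HasDerivAt (fun s => (φ s (c, p)).1) (W ((φ s (c, p)).1)) s := by
    intro c s
    have h2 : HasDerivAt (fun t => (φ t (c, p)).1) (V (φ s (c, p))).1 s :=
      HasFDerivAt.comp_hasDerivAt s
        (ContinuousLinearMap.fst ℝ (Fin d → ℝ) (Fin d → ℝ)).hasFDerivAt (hφflow (c, p) s)
    have h3 : (V (φ s (c, p))).1 = W ((φ s (c, p)).1) := by
      rw [hV]
      funext j
      simp [hWdef, hsnd (c, p) s]
    rwa [h3] at h2
  have ycont : ∀ c : Fin d → ℝ, Continuous (fun s => (φ s (c, p)).1) := fun c => by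
    rw [continuous_iff_continuousAt]; exact fun s => (hy' c s).continuousAt
  -- constants on the ball B = closedBall x 2
  set B : Set (Fin d → ℝ) := Metric.closedBall x 2 with hBdef
  have hBcomp : IsCompact B := isCompact_closedBall x 2
  have hBconv : Convex ℝ B := convex_closedBall x 2
  have hxB : x ∈ B := Metric.mem_closedBall_self (by norm_num)
  have hmemB : ∀ w : Fin d → ℝ, ‖w - x‖ ≤ 2 → w ∈ B := fun w hw =>
    Metric.mem_closedBall.2 (by rwa [dist_eq_norm])
  -- M : bound for W on B
  obtain ⟨M₀, hM₀⟩ := hBcomp.exists_bound_of_continuousOn hWc.continuous.continuousOn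
  set M : ℝ := max M₀ 1 with hMdef
  have hM1 : (1:ℝ) ≤ M := le_max_right _ _
  have hM0 : (0:ℝ) ≤ M := by linarith
  have hM : ∀ w ∈ B, ‖W w‖ ≤ M := fun w hw => (hM₀ w hw).trans (le_max_left _ _)
  -- K : bound for fderiv W on B (hence Lipschitz constant of W on B)
  have hDWcont : Continuous (fderiv ℝ W) := hWc.continuous_fderiv (by simp)
  obtain ⟨K₀, hK₀⟩ := hBcomp.exists_bound_of_continuousOn hDWcont.continuousOn
  set K : ℝ := max K₀ 0 with hKdef
  have hK0 : (0:ℝ) ≤ K := le_max_right _ _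
  have hK : ∀ w ∈ B, ‖fderiv ℝ W w‖ ≤ K := fun w hw => (hK₀ w hw).trans (le_max_left _ _)
  have hWlip : ∀ a ∈ B, ∀ b ∈ B, ‖W a - W b‖ ≤ K * ‖a - b‖ := fun a ha b hb =>
    Convex.norm_image_sub_le_of_norm_fderiv_le (fun w _ => hWd w) hK hBconv hb ha
  -- L₂ : Lipschitz constant of fderiv W on B
  have hDW1 : ContDiff ℝ 1 (fderiv ℝ W) := hWc.fderiv_right (WithTop.coe_le_coe.2 le_top)
  obtain ⟨L₀, hL₀⟩ := hBcomp.exists_bound_of_continuousOn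
    (hDW1.continuous_fderiv (by simp)).continuousOn
  set L₂ : ℝ := max L₀ 0 with hL₂def
  have hL₂0 : (0:ℝ) ≤ L₂ := le_max_right _ _
  have hDWlip : ∀ a ∈ B, ∀ b ∈ B, ‖fderiv ℝ W a - fderiv ℝ W b‖ ≤ L₂ * ‖a - b‖ :=
    fun a ha b hb =>
    Convex.norm_image_sub_le_of_norm_fderiv_le
      (fun w _ => (hDW1.differentiable (by simp)) w)
      (fun w hw => (hL₀ w hw).trans (le_max_left _ _)) hBconv hb ha
  -- quadratic Taylor bound for W on B
  have hquad : ∀ a ∈ B, ∀ b ∈ B,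
      ‖W b - W a - fderiv ℝ W a (b - a)‖ ≤ L₂ * ‖b - a‖ ^ 2 :=
    karasev_quad W (fun w => hWd w) B hBconv L₂ hL₂0 hDWlip
  -- the quadratic field A
  set A : (Fin d → ℝ) → (Fin d → ℝ) := fun c => fderiv ℝ W c (W c) with hAdef
  have hAbound : ∀ c ∈ B, ‖A c‖ ≤ K * M := fun c hc =>
    ((fderiv ℝ W c).le_opNorm (W c)).trans
      (mul_le_mul (hK c hc) (hM c hc) (norm_nonneg _) hK0)
  have hALip : ∀ c ∈ B, ‖A c - A x‖ ≤ (K * K + L₂ * M) * ‖c - x‖ := by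
    intro c hc
    have h1 : A c - A x = fderiv ℝ W c (W c - W x) + (fderiv ℝ W c - fderiv ℝ W x) (W x) := by
      simp [hAdef, ContinuousLinearMap.sub_apply, map_sub]
    rw [h1]
    calc ‖fderiv ℝ W c (W c - W x) + (fderiv ℝ W c - fderiv ℝ W x) (W x)‖
        ≤ ‖fderiv ℝ W c (W c - W x)‖ + ‖(fderiv ℝ W c - fderiv ℝ W x) (W x)‖ :=
          norm_add_le _ _
      _ ≤ K * (K * ‖c - x‖) + L₂ * ‖c - x‖ * M := by
          gcongr
          · calc ‖fderiv ℝ W c (W c - W x)‖ ≤ ‖fderiv ℝ W c‖ * ‖W c - W x‖ :=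
                (fderiv ℝ W c).le_opNorm _
            _ ≤ K * (K * ‖c - x‖) := by
                apply mul_le_mul (hK c hc) (hWlip c hc x hxB) (norm_nonneg _) hK0
          · calc ‖(fderiv ℝ W c - fderiv ℝ W x) (W x)‖
                ≤ ‖fderiv ℝ W c - fderiv ℝ W x‖ * ‖W x‖ :=
                  (fderiv ℝ W c - fderiv ℝ W x).le_opNorm _
            _ ≤ L₂ * ‖c - x‖ * M :=
                mul_le_mul (hDWlip c hc x hxB) (hM x hxB) (norm_nonneg _)
                  (by positivity)
      _ = (K * K + L₂ * M) * ‖c - x‖ := by ring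
  -- continuity of ε ↦ α ε (x, p) at 0, and α 0 (x,p) = x
  have hf0 : α 0 (x, p) = x := by
    have h := hα 0 x p
    rw [hφav] at h
    simpa using h
  have hfc : ContinuousAt (fun ε : ℝ => α ε (x, p)) 0 := by
    have : Continuous (fun ε : ℝ => α ε (x, p)) :=
      hαsmooth.continuous.comp (continuous_id.prodMk continuous_const)
    exact this.continuousAt
  obtain ⟨δ₁, hδ₁pos, hδ₁⟩ : ∃ δ₁ > 0, ∀ ε : ℝ, |ε| < δ₁ → ‖α ε (x, p) - x‖ ≤ 1 := by
    have h1 := Metric.continuousAt_iff.1 hfc 1 (by norm_num)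
    obtain ⟨δ₁, hδ₁pos, hδ₁⟩ := h1
    refine ⟨δ₁, hδ₁pos, fun ε hε => ?_⟩
    have h2 := hδ₁ (show dist ε 0 < δ₁ by simpa [Real.dist_eq] using hε)
    rw [dist_eq_norm, hf0] at h2
    exact h2.le
  -- remainder constants
  set C₂ : ℝ := L₂ * M ^ 2 + K * K * M with hC₂def
  have hC₂0 : 0 ≤ C₂ := by positivity
  set C₃ : ℝ := M / 2 + K * M / 6 + C₂ with hC₃def
  have hC₃0 : 0 ≤ C₃ := by positivity
  set C₄ : ℝ := K * M / 6 + C₂ with hC₄def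
  set C₇ : ℝ := L₂ * C₃ ^ 2 + K * C₄ + K * K * C₃ / 2 with hC₇def
  set C₆ : ℝ := (K * K + L₂ * M) * C₃ with hC₆def
  refine ⟨C₇ / 2 + C₆ / 6 + C₂ + 1, by positivity, min δ₁ (1 / (2 * M)), ?_, ?_⟩
  · have : (0:ℝ) < 1 / (2 * M) := by positivity
    exact lt_min hδ₁pos this
  intro ε hε
  have hεδ₁ : |ε| < δ₁ := hε.trans_le (min_le_left _ _)
  have hεhalf : |ε| < 1 / (2 * M) := hε.trans_le (min_le_right _ _)
  have hhalf : 1 / (2 * M) ≤ 1 / 2 := by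
    rw [div_le_div_iff₀ (by positivity) (by norm_num)]
    linarith
  have hεM : |ε| * M < 1 := by
    have h2 : |ε| * (2 * M) < 1 := (lt_div_iff₀ (by positivity)).1 hεhalf
    calc |ε| * M = |ε| * (2 * M) / 2 := by ring
    _ < 1 / 2 := by linarith
    _ < 1 := by norm_num
  have hε1 : |ε| ≤ 1 := by linarith
  rcases eq_or_ne ε 0 with rfl | hεne
  · have e1 : ((0:ℝ) / 2) = 0 := by norm_num
    have e2 : ((0:ℝ) ^ 2 / 12) = 0 := by norm_num
    rw [hf0, e1, e2, zero_smul, zero_smul, add_zero, add_zero, sub_self, norm_zero,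
      abs_zero]
    norm_num
  -- main case : ε ≠ 0
  have habs : ∀ u ∈ Set.uIcc (0:ℝ) ε, |u| ≤ |ε| := by
    intro u hu
    rcases le_total 0 ε with h | h
    · rw [Set.uIcc_of_le h] at hu
      rw [abs_of_nonneg hu.1, abs_of_nonneg h]; exact hu.2
    · rw [Set.uIcc_of_ge h] at hu
      rw [abs_of_nonpos hu.2, abs_of_nonpos h]; linarith [hu.1]
  set c : Fin d → ℝ := α ε (x, p) with hcdef
  set y : ℝ → (Fin d → ℝ) := fun s => (φ s (c, p)).1 with hydef
  have hy0 : y 0 = c := by rw [hydef]; simp [hφ0]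
  have hyd : ∀ s, HasDerivAt y (W (y s)) s := hy' c
  have hc1 : ‖c - x‖ ≤ 1 := hδ₁ ε hεδ₁
  have hcB : c ∈ B := hmemB c (hc1.trans (by norm_num))
  have traj : ∀ t ∈ Set.uIcc (0:ℝ) ε, ‖y t - x‖ ≤ 2 ∧ ‖y t - c‖ ≤ M * |t| := by
    have h := karasev_traj y (fun s => W (y s)) x M ε hyd
      (fun u hu => hM (y u) (hmemB _ hu)) (by rw [hy0]; exact hc1) hM0 hεM
    intro t ht
    obtain ⟨h1, h2⟩ := h t ht
    exact ⟨h1, by rwa [hy0] at h2⟩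
  have hyB : ∀ t ∈ Set.uIcc (0:ℝ) ε, y t ∈ B := fun t ht => hmemB _ (traj t ht).1
  have hWyc : Continuous fun s => W (y s) := hWc.continuous.comp (ycont c)
  have hycont : Continuous y := ycont c
  have hFTC : ∀ s : ℝ, (∫ u in (0:ℝ)..s, W (y u)) = y s - c := by
    intro s
    rw [← hy0]
    exact intervalIntegral.integral_eq_sub_of_hasDerivAt (fun t _ => hyd t)
      (hWyc.intervalIntegrable 0 s)
  have hInt : (∫ s in (0:ℝ)..ε, y s) = ε • x := by
    have h1 := hα ε x p
    rw [hφav, if_neg hεne] at h1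
    rw [← hcdef] at h1
    rw [show (fun s => (φ s (c, p)).1) = y from rfl] at h1
    rw [← h1, smul_inv_smul₀ hεne]
  -- second order expansion of W along the trajectory
  have hC1 : ∀ u ∈ Set.uIcc (0:ℝ) ε, ‖W (y u) - W c - u • A c‖ ≤ C₂ * |ε| ^ 2 := by
    intro u hu
    have huI : Set.uIcc (0:ℝ) u ⊆ Set.uIcc (0:ℝ) ε :=
      Set.uIcc_subset_uIcc Set.left_mem_uIcc hu
    have huabs : |u| ≤ |ε| := habs u hu
    have hyu2 : ‖y u - c‖ ≤ M * |ε| :=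
      (traj u hu).2.trans (mul_le_mul_of_nonneg_left huabs hM0)
    have e1 : ‖W (y u) - W c - fderiv ℝ W c (y u - c)‖ ≤ L₂ * (M * |ε|) ^ 2 :=
      (hquad c hcB (y u) (hyB u hu)).trans
        (mul_le_mul_of_nonneg_left
          (pow_le_pow_left₀ (norm_nonneg _) hyu2 2) hL₂0)
    have hρ : y u - c - u • W c = ∫ v in (0:ℝ)..u, (W (y v) - W c) := by
      rw [intervalIntegral.integral_sub (hWyc.intervalIntegrable 0 u)
        (continuous_const.intervalIntegrable 0 u), hFTC u,
        intervalIntegral.integral_const]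
      rw [sub_zero]
    have hρb : ‖y u - c - u • W c‖ ≤ K * (M * |ε|) * |ε| := by
      rw [hρ]
      have h2 : ‖∫ v in (0:ℝ)..u, (W (y v) - W c)‖ ≤ K * (M * |ε|) * |u - 0| := by
        apply intervalIntegral.norm_integral_le_of_norm_le_const
        intro v hv
        have hvmem : v ∈ Set.uIcc (0:ℝ) ε := huI (Set.Ioc_subset_Icc_self hv)
        calc ‖W (y v) - W c‖ ≤ K * ‖y v - c‖ := hWlip _ (hyB v hvmem) c hcB
        _ ≤ K * (M * |v|) := mul_le_mul_of_nonneg_left (traj v hvmem).2 hK0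
        _ ≤ K * (M * |ε|) := mul_le_mul_of_nonneg_left
            (mul_le_mul_of_nonneg_left (habs v hvmem) hM0) hK0
      rw [sub_zero] at h2
      exact h2.trans (mul_le_mul_of_nonneg_left huabs (by positivity))
    have hid : W (y u) - W c - u • A c
        = (W (y u) - W c - fderiv ℝ W c (y u - c))
          + fderiv ℝ W c (y u - c - u • W c) := by
      simp only [map_sub, map_smul, hAdef]
      abel
    rw [hid]
    calc ‖(W (y u) - W c - fderiv ℝ W c (y u - c))
          + fderiv ℝ W c (y u - c - u • W c)‖
        ≤ ‖W (y u) - W c - fderiv ℝ W c (y u - c)‖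
          + ‖fderiv ℝ W c (y u - c - u • W c)‖ := norm_add_le _ _
      _ ≤ L₂ * (M * |ε|) ^ 2 + K * (K * (M * |ε|) * |ε|) := by
          gcongr
          calc ‖fderiv ℝ W c (y u - c - u • W c)‖
              ≤ ‖fderiv ℝ W c‖ * ‖y u - c - u • W c‖ := (fderiv ℝ W c).le_opNorm _
          _ ≤ K * (K * (M * |ε|) * |ε|) :=
              mul_le_mul (hK c hcB) hρb (norm_nonneg _) hK0
      _ = C₂ * |ε| ^ 2 := by rw [hC₂def]; ring
  -- third order expansion of the trajectory
  have hr3 : ∀ s ∈ Set.uIcc (0:ℝ) ε,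
      ‖y s - c - s • W c - (s ^ 2 / 2) • A c‖ ≤ C₂ * |ε| ^ 2 * |ε| := by
    intro s hs
    have hsub : Set.uIcc (0:ℝ) s ⊆ Set.uIcc 0 ε :=
      Set.uIcc_subset_uIcc Set.left_mem_uIcc hs
    have hid : y s - c - s • W c - (s ^ 2 / 2) • A c
        = ∫ u in (0:ℝ)..s, (W (y u) - W c - u • A c) := by
      have iAc : IntervalIntegrable (fun u : ℝ => u • A c) MeasureTheory.volume 0 s := by
        exact (continuous_id.smul continuous_const).intervalIntegrable 0 s
      rw [intervalIntegral.integral_sub (f := fun u => W (y u) - W c)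
            ((hWyc.sub continuous_const).intervalIntegrable 0 s) iAc,
          intervalIntegral.integral_sub (hWyc.intervalIntegrable 0 s)
            (continuous_const.intervalIntegrable 0 s),
          hFTC s, intervalIntegral.integral_const,
          intervalIntegral.integral_smul_const, integral_id]
      norm_num
    rw [hid]
    have h2 := intervalIntegral.norm_integral_le_of_norm_le_const
      (C := C₂ * |ε| ^ 2) (a := (0:ℝ)) (b := s)
      (f := fun u => W (y u) - W c - u • A c)
      (fun u hu => hC1 u (hsub (Set.Ioc_subset_Icc_self hu)))
    rw [sub_zero] at h2
    exact h2.trans (mul_le_mul_of_nonneg_left (habs s hs) (by positivity))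
  set r4 : Fin d → ℝ :=
    ∫ s in (0:ℝ)..ε, (y s - c - s • W c - (s ^ 2 / 2) • A c) with hr4def
  have hr4b : ‖r4‖ ≤ C₂ * |ε| ^ 2 * |ε| * |ε| := by
    have h2 := intervalIntegral.norm_integral_le_of_norm_le_const
      (C := C₂ * |ε| ^ 2 * |ε|) (a := (0:ℝ)) (b := ε)
      (f := fun s => y s - c - s • W c - (s ^ 2 / 2) • A c)
      (fun s hs => hr3 s (Set.Ioc_subset_Icc_self hs))
    rw [sub_zero] at h2
    exact h2
  have hr4eq : r4 = ε • x - ε • c - (ε ^ 2 / 2) • W c - (ε ^ 3 / 6) • A c := by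
    rw [hr4def]
    have i1 : Continuous fun s : ℝ => s • W c := continuous_id.smul continuous_const
    have i2 : Continuous fun s : ℝ => (s ^ 2 / 2) • A c :=
      ((continuous_pow 2).div_const 2).smul continuous_const
    rw [intervalIntegral.integral_sub (f := fun s => y s - c - s • W c)
          (((hycont.sub continuous_const).sub i1).intervalIntegrable 0 ε)
          (i2.intervalIntegrable 0 ε),
        intervalIntegral.integral_sub (f := fun s => y s - c)
          ((hycont.sub continuous_const).intervalIntegrable 0 ε)
          (i1.intervalIntegrable 0 ε),
        intervalIntegral.integral_sub (hycont.intervalIntegrable 0 ε)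
          (continuous_const.intervalIntegrable 0 ε),
        hInt, intervalIntegral.integral_const,
        intervalIntegral.integral_smul_const, integral_id,
        intervalIntegral.integral_smul_const]
    have i3 : (∫ s in (0:ℝ)..ε, s ^ 2 / 2) = ε ^ 3 / 6 := by
      rw [intervalIntegral.integral_div, integral_pow]
      ring
    rw [i3]
    norm_num
  -- divide by ε
  have he0 : x - c - (ε / 2) • W c - (ε ^ 2 / 6) • A c = ε⁻¹ • r4 := by
    have s1 : ε⁻¹ * (ε ^ 2 / 2) = ε / 2 := by field_simp
    have s2 : ε⁻¹ * (ε ^ 3 / 6) = ε ^ 2 / 6 := by field_simp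
    rw [hr4eq, smul_sub, smul_sub, smul_sub, inv_smul_smul₀ hεne, inv_smul_smul₀ hεne,
      smul_smul, smul_smul, s1, s2]
  have he0b : ‖x - c - (ε / 2) • W c - (ε ^ 2 / 6) • A c‖ ≤ C₂ * |ε| ^ 3 := by
    rw [he0, norm_smul, norm_inv, Real.norm_eq_abs]
    have hεabs : (0:ℝ) < |ε| := abs_pos.2 hεne
    calc |ε|⁻¹ * ‖r4‖ ≤ |ε|⁻¹ * (C₂ * |ε| ^ 2 * |ε| * |ε|) :=
        mul_le_mul_of_nonneg_left hr4b (by positivity)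
    _ = C₂ * |ε| ^ 3 * (|ε|⁻¹ * |ε|) := by ring
    _ = C₂ * |ε| ^ 3 := by rw [inv_mul_cancel₀ (ne_of_gt hεabs), mul_one]
  set e0 : Fin d → ℝ := x - c - (ε / 2) • W c - (ε ^ 2 / 6) • A c with he0def
  -- powers of |ε|
  have hε2 : |ε| ^ 2 ≤ |ε| := by nlinarith [abs_nonneg ε]
  have hε3 : |ε| ^ 3 ≤ |ε| ^ 2 := by nlinarith [abs_nonneg ε, sq_nonneg (|ε|)]
  have habs2 : (ε:ℝ) ^ 2 = |ε| ^ 2 := (sq_abs ε).symm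
  have hεhalfabs : |ε / 2| = |ε| / 2 := by rw [abs_div]; norm_num
  -- basic bounds
  have hWcM : ‖W c‖ ≤ M := hM c hcB
  have hAcKM : ‖A c‖ ≤ K * M := hAbound c hcB
  have hcx : ‖c - x‖ ≤ C₃ * |ε| := by
    have h1 : c - x = -((ε / 2) • W c) - (ε ^ 2 / 6) • A c - e0 := by
      rw [he0def]; abel
    have h2 : ‖c - x‖ ≤ ‖(ε / 2) • W c‖ + ‖(ε ^ 2 / 6) • A c‖ + ‖e0‖ := by
      rw [h1]
      refine (norm_sub_le _ _).trans ?_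
      gcongr
      refine (norm_sub_le _ _).trans ?_
      rw [norm_neg]
    have h3 : ‖(ε / 2) • W c‖ ≤ |ε| / 2 * M := by
      rw [norm_smul, Real.norm_eq_abs, hεhalfabs]
      exact mul_le_mul_of_nonneg_left hWcM (by positivity)
    have h4 : ‖(ε ^ 2 / 6) • A c‖ ≤ |ε| ^ 2 / 6 * (K * M) := by
      rw [norm_smul, Real.norm_eq_abs, abs_div, abs_pow]
      have : |ε| ^ 2 / |(6:ℝ)| = |ε| ^ 2 / 6 := by norm_num
      rw [this]
      exact mul_le_mul_of_nonneg_left hAcKM (by positivity)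
    have b1 : |ε| ^ 2 / 6 * (K * M) ≤ |ε| / 6 * (K * M) := by
      apply mul_le_mul_of_nonneg_right _ (by positivity)
      linarith
    have b2 : C₂ * |ε| ^ 3 ≤ C₂ * |ε| := by
      apply mul_le_mul_of_nonneg_left _ hC₂0
      linarith
    refine h2.trans ?_
    calc ‖(ε / 2) • W c‖ + ‖(ε ^ 2 / 6) • A c‖ + ‖e0‖
        ≤ |ε| / 2 * M + |ε| / 6 * (K * M) + C₂ * |ε| :=
          add_le_add (add_le_add h3 (h4.trans b1)) (he0b.trans b2)
    _ = C₃ * |ε| := by rw [hC₃def]; ring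
  have hcB' : c ∈ B := hcB
  -- e2 : first-order remainder of c - x
  set e2 : Fin d → ℝ := c - x + (ε / 2) • W c with he2def
  have he2b : ‖e2‖ ≤ C₄ * |ε| ^ 2 := by
    have h1 : e2 = -((ε ^ 2 / 6) • A c) - e0 := by rw [he2def, he0def]; abel
    have h2 : ‖e2‖ ≤ ‖(ε ^ 2 / 6) • A c‖ + ‖e0‖ := by
      rw [h1]
      refine (norm_sub_le _ _).trans ?_
      rw [norm_neg]
    have h4 : ‖(ε ^ 2 / 6) • A c‖ ≤ |ε| ^ 2 / 6 * (K * M) := by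
      rw [norm_smul, Real.norm_eq_abs, abs_div, abs_pow]
      have : |ε| ^ 2 / |(6:ℝ)| = |ε| ^ 2 / 6 := by norm_num
      rw [this]
      exact mul_le_mul_of_nonneg_left hAcKM (by positivity)
    have h5 : ‖e0‖ ≤ C₂ * |ε| ^ 2 :=
      he0b.trans (mul_le_mul_of_nonneg_left hε3 hC₂0)
    refine h2.trans ((add_le_add h4 h5).trans_eq ?_)
    rw [hC₄def]; ring
  set e5 : Fin d → ℝ := W c - W x with he5def
  have he5b : ‖e5‖ ≤ K * (C₃ * |ε|) :=
    (hWlip c hcB x hxB).trans (mul_le_mul_of_nonneg_left hcx hK0)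
  set e1 : Fin d → ℝ := W c - W x - fderiv ℝ W x (c - x) with he1def
  have he1b : ‖e1‖ ≤ L₂ * C₃ ^ 2 * |ε| ^ 2 := by
    have h1 := hquad x hxB c hcB
    rw [← he1def] at h1
    refine h1.trans ?_
    have h2 : ‖c - x‖ ^ 2 ≤ (C₃ * |ε|) ^ 2 :=
      pow_le_pow_left₀ (norm_nonneg _) hcx 2
    calc L₂ * ‖c - x‖ ^ 2 ≤ L₂ * (C₃ * |ε|) ^ 2 :=
        mul_le_mul_of_nonneg_left h2 hL₂0
    _ = L₂ * C₃ ^ 2 * |ε| ^ 2 := by ring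
  set e7 : Fin d → ℝ := e1 + fderiv ℝ W x e2 - (ε / 2) • fderiv ℝ W x e5 with he7def
  have hWc_expand : W c = W x - (ε / 2) • A x + e7 := by
    have hD1 : fderiv ℝ W x (c - x)
        = fderiv ℝ W x e2 - (ε / 2) • fderiv ℝ W x (W c) := by
      have : c - x = e2 - (ε / 2) • W c := by rw [he2def]; abel
      rw [this, map_sub, map_smul]
    have hD2 : fderiv ℝ W x (W c) = A x + fderiv ℝ W x e5 := by
      have : W c = W x + e5 := by rw [he5def]; abel
      rw [this, map_add]
    have hD3 : W c = W x + fderiv ℝ W x (c - x) + e1 := by rw [he1def]; abel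
    rw [hD3, hD1, hD2, he7def]
    rw [smul_add]
    abel
  have he7b : ‖e7‖ ≤ C₇ * |ε| ^ 2 := by
    have h1 : ‖e7‖ ≤ ‖e1‖ + ‖fderiv ℝ W x e2‖ + ‖(ε / 2) • fderiv ℝ W x e5‖ := by
      rw [he7def]
      refine (norm_sub_le _ _).trans ?_
      gcongr
      exact norm_add_le _ _
    have h2 : ‖fderiv ℝ W x e2‖ ≤ K * (C₄ * |ε| ^ 2) :=
      ((fderiv ℝ W x).le_opNorm e2).trans
        (mul_le_mul (hK x hxB) he2b (norm_nonneg _) hK0)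
    have h3 : ‖(ε / 2) • fderiv ℝ W x e5‖ ≤ |ε| / 2 * (K * (K * (C₃ * |ε|))) := by
      rw [norm_smul, Real.norm_eq_abs, hεhalfabs]
      apply mul_le_mul_of_nonneg_left _ (by positivity)
      exact ((fderiv ℝ W x).le_opNorm e5).trans
        (mul_le_mul (hK x hxB) he5b (norm_nonneg _) hK0)
    refine h1.trans ((add_le_add (add_le_add he1b h2) h3).trans_eq ?_)
    rw [hC₇def]; ring
  set e6 : Fin d → ℝ := A c - A x with he6def
  have he6b : ‖e6‖ ≤ C₆ * |ε| := by
    rw [he6def, hC₆def]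
    calc ‖A c - A x‖ ≤ (K * K + L₂ * M) * ‖c - x‖ := hALip c hcB
    _ ≤ (K * K + L₂ * M) * (C₃ * |ε|) :=
        mul_le_mul_of_nonneg_left hcx (by positivity)
    _ = (K * K + L₂ * M) * C₃ * |ε| := by ring
  have hAc_expand : A c = A x + e6 := by rw [he6def]; abel
  have hc_expand : c = x - (ε / 2) • W c - (ε ^ 2 / 6) • A c - e0 := by
    rw [he0def]; abel
  -- the final identity
  have hfinal : c - (x + (ε / 2) • (-W x) + (ε ^ 2 / 12) • A x)
      = -((ε / 2) • e7) - (ε ^ 2 / 6) • e6 - e0 := by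
    conv_lhs => rw [hc_expand, hWc_expand, hAc_expand]
    module
  have hfinalb : ‖c - (x + (ε / 2) • (-W x) + (ε ^ 2 / 12) • A x)‖
      ≤ (C₇ / 2 + C₆ / 6 + C₂ + 1) * |ε| ^ 3 := by
    rw [hfinal]
    have h1 : ‖-((ε / 2) • e7) - (ε ^ 2 / 6) • e6 - e0‖
        ≤ ‖(ε / 2) • e7‖ + ‖(ε ^ 2 / 6) • e6‖ + ‖e0‖ := by
      refine (norm_sub_le _ _).trans ?_
      gcongr
      refine (norm_sub_le _ _).trans ?_
      rw [norm_neg]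
    have h2 : ‖(ε / 2) • e7‖ ≤ |ε| / 2 * (C₇ * |ε| ^ 2) := by
      rw [norm_smul, Real.norm_eq_abs, hεhalfabs]
      exact mul_le_mul_of_nonneg_left he7b (by positivity)
    have h3 : ‖(ε ^ 2 / 6) • e6‖ ≤ |ε| ^ 2 / 6 * (C₆ * |ε|) := by
      rw [norm_smul, Real.norm_eq_abs, abs_div, abs_pow]
      have h6 : |ε| ^ 2 / |(6:ℝ)| = |ε| ^ 2 / 6 := by norm_num
      rw [h6]
      exact mul_le_mul_of_nonneg_left he6b (by positivity)
    refine h1.trans ((add_le_add (add_le_add h2 h3) he0b).trans ?_)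
    have hq : |ε| / 2 * (C₇ * |ε| ^ 2) + |ε| ^ 2 / 6 * (C₆ * |ε|) + C₂ * |ε| ^ 3
        = (C₇ / 2 + C₆ / 6 + C₂) * |ε| ^ 3 := by ring
    rw [hq]
    have hpos : (0:ℝ) ≤ |ε| ^ 3 := by positivity
    exact mul_le_mul_of_nonneg_right (by linarith) hpos
  -- identify the model vectors
  have hWxneg : (fun i => ∑ v : Fin d, π x v i * p v) = -W x := by
    funext i
    rw [hWdef]
    simp
  have hAx : A x = (fun i => ∑ v : Fin d, ∑ w : Fin d, ∑ u : Fin d,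
      fderiv ℝ (fun y => π y v i) x (Pi.single u 1) * π x w u * p v * p w) := by
    have hdiffπ : ∀ v i : Fin d, DifferentiableAt ℝ (fun y => π y v i) x := fun v i =>
      ((hπc v i).differentiable (by simp)).differentiableAt
    have hWi : ∀ i : Fin d, HasFDerivAt (fun y => W y i)
        (-(∑ v : Fin d, p v • fderiv ℝ (fun y => π y v i) x)) x := by
      intro i
      have h2 : HasFDerivAt (fun y => ∑ v : Fin d, π y v i * p v)
          (∑ v : Fin d, p v • fderiv ℝ (fun y => π y v i) x) x :=
        HasFDerivAt.fun_sum (fun v _ => ((hdiffπ v i).hasFDerivAt).mul_const (p v))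
      exact h2.neg
    have hDWx : fderiv ℝ W x = ContinuousLinearMap.pi
        (fun i => -(∑ v : Fin d, p v • fderiv ℝ (fun y => π y v i) x)) :=
      HasFDerivAt.fderiv (hasFDerivAt_pi.2 hWi)
    funext i
    show A x i = ∑ v : Fin d, ∑ w : Fin d, ∑ u : Fin d,
      fderiv ℝ (fun y => π y v i) x (Pi.single u 1) * π x w u * p v * p w
    have h1 : A x i = fderiv ℝ W x (W x) i := rfl
    rw [h1, hDWx, ContinuousLinearMap.pi_apply, ContinuousLinearMap.neg_apply,
      ContinuousLinearMap.sum_apply]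
    simp only [ContinuousLinearMap.smul_apply, smul_eq_mul]
    have h2 : ∀ v : Fin d, (fderiv ℝ (fun y => π y v i) x) (W x)
        = ∑ u : Fin d, W x u * fderiv ℝ (fun y => π y v i) x (Pi.single u 1) :=
      fun v => karasev_clm_expand _ (W x)
    calc -(∑ v : Fin d, p v * (fderiv ℝ (fun y => π y v i) x) (W x))
        = -(∑ v : Fin d, p v * ∑ u : Fin d,
            (-(∑ w : Fin d, π x w u * p w)) * fderiv ℝ (fun y => π y v i) x (Pi.single u 1)) := by
          congr 1
          refine Finset.sum_congr rfl fun v _ => ?_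
          rw [h2 v]
      _ = ∑ v : Fin d, ∑ w : Fin d, ∑ u : Fin d,
            fderiv ℝ (fun y => π y v i) x (Pi.single u 1) * π x w u * p v * p w :=
          karasev_sum_identity (fun w u => π x w u)
            (fun v u => fderiv ℝ (fun y => π y v i) x (Pi.single u 1)) p
  rw [hWxneg, ← hAx]
  exact hfinalb
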